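/- For each n ≥ 1, the set {[ad_T^i(A), ad_T^j(A)] : i > j ≥ 0, i + j = n} is a linearly independent subset of the free Lie algebra L(T,A) over ℚ. -/

import Mathlib

noncomputable section

namespace Stmt14

abbrev L := FreeLieAlgebra ℚ (Fin 2)

def T : L := FreeLieAlgebra.of ℚ 0

def A : L := FreeLieAlgebra.of ℚ 1

/-! Represent `L(T, A)` by `3 × 3` matrices over `ℚ[x, y]`, sending `T` to `diag(x, 0, -y)` and
`A` to `E₀₁ + E₁₂`. Then `ad_T^k A ↦ x^k E₀₁ + y^k E₁₂`, so `[ad_T^i A, ad_T^j A]` maps to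
`(x^i y^j - x^j y^i) E₀₂`. For `i > j` the monomial `x^i y^j` occurs in the `(i, j)`-th of these
polynomials and in no other, so they are linearly independent. -/

attribute [local instance 100] LieRing.ofAssociativeRing

open LieAlgebra Matrix MvPolynomial

lemma LieHom.map_ad_pow_apply {R L L' : Type*} [CommRing R] [LieRing L] [LieAlgebra R L]
    [LieRing L'] [LieAlgebra R L'] (f : L →ₗ⁅R⁆ L') (x y : L) (k : ℕ) :
    f ((ad R L x ^ k) y) = (ad R L' (f x) ^ k) (f y) := by
  induction k with
  | zero => rfl
  | succ k ih =>
    rw [pow_succ', pow_succ', Module.End.mul_apply, Module.End.mul_apply, ad_apply, ad_apply,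
      LieHom.map_lie, ih]

section Matrices

variable {K R : Type*} [CommRing K] [CommRing R] [Algebra K R]

lemma lie_diagonal_single {n : Type*} [Fintype n] [DecidableEq n] (d : n → R) (i j : n)
    (c : R) : ⁅diagonal d, Matrix.single i j c⁆ = Matrix.single i j ((d i - d j) * c) := by
  ext a b
  simp only [Ring.lie_def, Matrix.sub_apply, diagonal_mul, mul_diagonal, single_apply]
  split_ifs with h
  · obtain ⟨rfl, rfl⟩ := h
    ring
  · ring

def superdiagonal (a b : R) : Matrix (Fin 3) (Fin 3) R :=
  Matrix.single 0 1 a + Matrix.single 1 2 b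

lemma lie_diagonal_superdiagonal (d : Fin 3 → R) (a b : R) :
    ⁅diagonal d, superdiagonal a b⁆ = superdiagonal ((d 0 - d 1) * a) ((d 1 - d 2) * b) := by
  rw [superdiagonal, lie_add, lie_diagonal_single, lie_diagonal_single, superdiagonal]

lemma lie_superdiagonal (a b c e : R) :
    ⁅superdiagonal a b, superdiagonal c e⁆ = Matrix.single 0 2 (a * e - c * b) := by
  ext i j
  fin_cases i <;> fin_cases j <;>
    simp [Ring.lie_def, superdiagonal, Matrix.mul_apply, single_apply]

lemma ad_diagonal_pow_superdiagonal (d : Fin 3 → R) (a b : R) (k : ℕ) :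
    (ad K (Matrix (Fin 3) (Fin 3) R) (diagonal d) ^ k) (superdiagonal a b) =
      superdiagonal ((d 0 - d 1) ^ k * a) ((d 1 - d 2) ^ k * b) := by
  induction k with
  | zero => simp
  | succ k ih =>
    rw [pow_succ', Module.End.mul_apply, ih, ad_apply, lie_diagonal_superdiagonal]
    ring_nf

end Matrices

section Polynomials

variable {R : Type*} [CommRing R]

def expPair (p : ℕ × ℕ) : Fin 2 →₀ ℕ := Finsupp.single 0 p.1 + Finsupp.single 1 p.2

lemma expPair_injective : Function.Injective expPair := by
  intro p q h
  have h0 := DFunLike.congr_fun h 0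
  have h1 := DFunLike.congr_fun h 1
  simp [expPair] at h0 h1
  exact Prod.ext h0 h1

lemma coeff_expPair_X_pow_mul_X_pow (q : ℕ × ℕ) (i j : ℕ) :
    coeff (expPair q) (X 0 ^ i * X 1 ^ j : MvPolynomial (Fin 2) R) =
      if (i, j) = q then 1 else 0 := by
  have hmonomial : (X 0 ^ i * X 1 ^ j : MvPolynomial (Fin 2) R) = monomial (expPair (i, j)) 1 := by
    simp [expPair, X_pow_eq_monomial, monomial_mul]
  simp only [hmonomial, coeff_monomial, expPair_injective.eq_iff]

lemma linearIndependent_X_pow_mul_sub (S : ℕ × ℕ → Prop) (hS : ∀ p, S p → p.2 < p.1) :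
    LinearIndependent R fun p : {p // S p} =>
      (X 0 ^ p.1.1 * X 1 ^ p.1.2 - X 0 ^ p.1.2 * X 1 ^ p.1.1 : MvPolynomial (Fin 2) R) := by
  classical
  let coeffs : MvPolynomial (Fin 2) R →ₗ[R] {p // S p} → R :=
    LinearMap.pi fun q => lcoeff R (expPair q)
  refine .of_comp coeffs ?_
  convert Pi.linearIndependent_single_one {p // S p} R using 1
  funext p q
  have hswap : (p.1.2, p.1.1) ≠ q.1 := fun h => by
    have hq := hS _ q.2
    rw [← h] at hq
    exact lt_asymm (hS _ p.2) hq
  simp [coeffs, coeff_expPair_X_pow_mul_X_pow, hswap, Pi.single_apply, Subtype.ext_iff, eq_comm]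

end Polynomials

def matrixRep : L →ₗ⁅ℚ⁆ Matrix (Fin 3) (Fin 3) (MvPolynomial (Fin 2) ℚ) :=
  FreeLieAlgebra.lift ℚ ![diagonal ![X 0, 0, -X 1], superdiagonal 1 1]

lemma matrixRep_ad_pow (k : ℕ) :
    matrixRep ((ad ℚ L T ^ k) A) = superdiagonal (X 0 ^ k) (X 1 ^ k) := by
  rw [LieHom.map_ad_pow_apply]
  simp [matrixRep, T, A, ad_diagonal_pow_superdiagonal]

theorem linearIndependent_brackets_general (n : ℕ) :
    LinearIndependent ℚ
      (fun p : { p : ℕ × ℕ // p.2 < p.1 ∧ p.1 + p.2 = n } =>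
        ⁅((LieAlgebra.ad ℚ L T) ^ (p : ℕ × ℕ).1) A,
          ((LieAlgebra.ad ℚ L T) ^ (p : ℕ × ℕ).2) A⁆) := by
  refine .of_comp ((entryLinearMap ℚ _ 0 2) ∘ₗ matrixRep.toLinearMap) ?_
  simp only [Function.comp_def, LinearMap.comp_apply, LieHom.coe_toLinearMap, LieHom.map_lie,
    matrixRep_ad_pow, lie_superdiagonal, entryLinearMap_apply, single_apply_same]
  exact linearIndependent_X_pow_mul_sub _ fun _ hp => hp.1

/-- For each `n ≥ 1`, the family `{[ad_T^i(A), ad_T^j(A)] : i > j ≥ 0, i + j = n}` is linearly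
independent in the free Lie algebra `L(T,A)` over `ℚ`. -/
theorem linearIndependent_brackets (n : ℕ) (hn : 1 ≤ n) :
    LinearIndependent ℚ
      (fun p : { p : ℕ × ℕ // p.2 < p.1 ∧ p.1 + p.2 = n } =>
        ⁅((LieAlgebra.ad ℚ L T) ^ (p : ℕ × ℕ).1) A,
          ((LieAlgebra.ad ℚ L T) ^ (p : ℕ × ℕ).2) A⁆) :=
  linearIndependent_brackets_general n

end Stmt14
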